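/- For every positive integer m and every real x ≥ 0, the regularized lower incomplete gamma function satisfies γ(m, x)/Γ(m) ≤ (1 − e^{−x})^m, where γ(m,x) = ∫₀ˣ t^{m−1} e^{−t} dt and Γ(m) = (m−1)!. -/

import Mathlib

open MeasureTheory Real

/-- The lower incomplete gamma function with integer shape `m`:
`γ(m, x) = ∫₀ˣ t^(m-1) e^(-t) dt`. -/
noncomputable def lowerIncGamma (m : ℕ) (x : ℝ) : ℝ :=
  ∫ t in Set.Ioc (0 : ℝ) x, t ^ (m - 1) * Real.exp (-t)

/-!
Write `J n x = ∫₀ˣ tⁿ e^(-t) dt`. Integration by parts gives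
`J (n+1) x = (n+1) J n x - x^(n+1) e^(-x)`, and bounding `e^(-t) ≤ 1` in the integrand gives
`(n+1) J n x ≤ x^(n+1)`. Together, `J (n+1) x ≤ (n+1) (1 - e^(-x)) J n x`, so each step of the
induction on `n` costs exactly one factor `1 - e^(-x)`, starting from `J 0 x = 1 - e^(-x)`.
-/

theorem integral_pow_succ_mul_exp_neg (n : ℕ) (x : ℝ) :
    ∫ t in (0 : ℝ)..x, t ^ (n + 1) * exp (-t) =
      (n + 1) * (∫ t in (0 : ℝ)..x, t ^ n * exp (-t)) - x ^ (n + 1) * exp (-x) := by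
  have hparts := intervalIntegral.integral_mul_deriv_eq_deriv_mul
    (u := fun t => t ^ (n + 1)) (u' := fun t => (n + 1 : ℝ) * t ^ n)
    (v := fun t => -exp (-t)) (v' := fun t => exp (-t)) (a := 0) (b := x)
    (fun t _ => by simpa using hasDerivAt_pow (n + 1) t)
    (fun t _ => by simpa using ((hasDerivAt_neg t).exp).fun_neg)
    (by apply Continuous.intervalIntegrable; fun_prop)
    (by apply Continuous.intervalIntegrable; fun_prop)
  have hrhs : ∫ t in (0 : ℝ)..x, (n + 1 : ℝ) * t ^ n * -exp (-t) =
      -((n + 1) * ∫ t in (0 : ℝ)..x, t ^ n * exp (-t)) := by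
    rw [← intervalIntegral.integral_const_mul, ← intervalIntegral.integral_neg]
    congr 1 with t
    ring
  rw [hparts, hrhs]
  ring

theorem integral_pow_mul_exp_neg_le (n : ℕ) {x : ℝ} (hx : 0 ≤ x) :
    (n + 1) * ∫ t in (0 : ℝ)..x, t ^ n * exp (-t) ≤ x ^ (n + 1) := by
  have hmono : ∫ t in (0 : ℝ)..x, t ^ n * exp (-t) ≤ ∫ t in (0 : ℝ)..x, t ^ n := by
    refine intervalIntegral.integral_mono_on hx
      (by apply Continuous.intervalIntegrable; fun_prop)
      (by apply Continuous.intervalIntegrable; fun_prop) fun t ht => ?_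
    exact mul_le_of_le_one_right (pow_nonneg ht.1 n) (exp_le_one_iff.2 (neg_nonpos.2 ht.1))
  rw [integral_pow, zero_pow n.succ_ne_zero, sub_zero] at hmono
  rwa [le_div_iff₀' (by positivity)] at hmono

theorem integral_pow_succ_mul_exp_neg_le (n : ℕ) {x : ℝ} (hx : 0 ≤ x) :
    ∫ t in (0 : ℝ)..x, t ^ (n + 1) * exp (-t) ≤
      (n + 1) * (1 - exp (-x)) * ∫ t in (0 : ℝ)..x, t ^ n * exp (-t) := by
  rw [integral_pow_succ_mul_exp_neg]
  nlinarith [integral_pow_mul_exp_neg_le n hx, exp_pos (-x)]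

theorem integral_pow_mul_exp_neg_div_factorial_le (n : ℕ) {x : ℝ} (hx : 0 ≤ x) :
    (∫ t in (0 : ℝ)..x, t ^ n * exp (-t)) / n.factorial ≤ (1 - exp (-x)) ^ (n + 1) := by
  induction n with
  | zero => simp
  | succ n ih =>
    have hE : 0 ≤ 1 - exp (-x) := sub_nonneg.2 (exp_le_one_iff.2 (neg_nonpos.2 hx))
    calc (∫ t in (0 : ℝ)..x, t ^ (n + 1) * exp (-t)) / (n + 1).factorial
        ≤ (n + 1) * (1 - exp (-x)) * (∫ t in (0 : ℝ)..x, t ^ n * exp (-t)) /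
            ((n + 1) * n.factorial) := by
          push_cast [Nat.factorial_succ]
          gcongr
          exact integral_pow_succ_mul_exp_neg_le n hx
      _ = (1 - exp (-x)) * ((∫ t in (0 : ℝ)..x, t ^ n * exp (-t)) / n.factorial) := by
          field_simp
      _ ≤ (1 - exp (-x)) ^ (n + 1 + 1) := by
          rw [pow_succ' _ (n + 1)]
          gcongr

/-- For every positive integer `m` and real `x ≥ 0`,
`γ(m, x) / Γ(m) ≤ (1 - e^(-x))^m`, where `Γ(m) = (m-1)!`. -/
theorem lowerIncGamma_div_factorial_le (m : ℕ) (hm : 0 < m) (x : ℝ) (hx : 0 ≤ x) :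
    lowerIncGamma m x / (Nat.factorial (m - 1) : ℝ) ≤ (1 - Real.exp (-x)) ^ m := by
  obtain ⟨n, rfl⟩ := Nat.exists_eq_add_of_lt hm
  rw [zero_add, lowerIncGamma, Nat.add_sub_cancel, ← intervalIntegral.integral_of_le hx]
  exact integral_pow_mul_exp_neg_div_factorial_le n hx
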